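/- Let C ⊆ V be a dense and isolated community (threshold σ = 0) in a finite undirected graph such that min_{i∈C} deg(i) > max{deg(i) : i ∉ C, a_{iC} > 0}. Then C is an (α,β)-cluster with β = ((1−φ(C))/(2|C|))·min_{i∈C} deg(i) and α = ((1−φ(C))/(2|C|))·max{deg(i) : i ∉ C, a_{iC} > 0}, i.e., a_{iC} ≥ β|C| for all i ∈ C and a_{iC} ≤ α|C| for all i ∉ C. -/

import Mathlib

open Finset

attribute [local instance] Classical.propDecidable

/-- degree of node `i`. -/
noncomputable def w {n : ℕ} (A : Matrix (Fin n) (Fin n) ℝ) (i : Fin n) : ℝ := ∑ j, A i j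

/-- edge weight from a node to a set. -/
noncomputable def aN {n : ℕ} (A : Matrix (Fin n) (Fin n) ℝ) (i : Fin n) (C : Finset (Fin n)) : ℝ :=
  ∑ j ∈ C, A i j

/-- total edge weight inside a set. -/
noncomputable def aCC {n : ℕ} (A : Matrix (Fin n) (Fin n) ℝ) (C : Finset (Fin n)) : ℝ :=
  ∑ i ∈ C, ∑ j ∈ C, A i j

/-- volume of a set of nodes. -/
noncomputable def vol {n : ℕ} (A : Matrix (Fin n) (Fin n) ℝ) (C : Finset (Fin n)) : ℝ :=
  ∑ j ∈ C, w A j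

/-- conductance of a set. -/
noncomputable def phi {n : ℕ} (A : Matrix (Fin n) (Fin n) ℝ) (C : Finset (Fin n)) : ℝ :=
  1 - aCC A C / vol A C

/-!
Write `t = 1 - φ(C) = a_CC / a_CV`. Density at `i ∈ C` says `t · deg i < 2 a_iC`, so
`t · min_C deg ≤ 2 a_iC`; isolation at an external neighbour says `2 a_iC ≤ t · deg i ≤ t · max deg`,
and a node outside `C` without neighbours in `C` has `a_iC = 0`. Dividing by `2|C|` gives the
cluster bounds. Density also forces every `a_iC`, `i ∈ C`, to be positive, hence `t > 0`, and
then the degree gap gives `α < β`; finally `a_iC ≤ |C|` gives `β ≤ 1`.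
-/

section

variable {n : ℕ} {A : Matrix (Fin n) (Fin n) ℝ} {C : Finset (Fin n)} {i : Fin n}

lemma w_nonneg (hA : ∀ i j, 0 ≤ A i j) (i : Fin n) : 0 ≤ w A i :=
  sum_nonneg fun j _ => hA i j

lemma aN_nonneg (hA : ∀ i j, 0 ≤ A i j) (i : Fin n) : 0 ≤ aN A i C :=
  sum_nonneg fun j _ => hA i j

lemma aN_le_card (hA : ∀ i j, A i j ≤ 1) (i : Fin n) : aN A i C ≤ C.card := by
  simpa [aN] using sum_le_sum fun j (_ : j ∈ C) => hA i j

lemma aCC_eq_sum_aN : aCC A C = ∑ i ∈ C, aN A i C := rfl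

lemma vol_pos (hw : ∀ i, 0 < w A i) (hC : C.Nonempty) : 0 < vol A C :=
  sum_pos (fun i _ => hw i) hC

lemma one_sub_phi_eq : 1 - phi A C = aCC A C / vol A C :=
  sub_sub_cancel _ _

lemma one_sub_phi_nonneg (hA : ∀ i j, 0 ≤ A i j) : 0 ≤ 1 - phi A C := by
  rw [one_sub_phi_eq]
  exact div_nonneg (sum_nonneg fun i _ => aN_nonneg hA i) (sum_nonneg fun i _ => w_nonneg hA i)

lemma aN_pos_of_lt_div (hA : ∀ i j, 0 ≤ A i j) (hwi : 0 < w A i)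
    (hi : 1 - phi A C < 2 * aN A i C / w A i) : 0 < aN A i C := by
  have := (div_pos_iff_of_pos_right hwi).1 ((one_sub_phi_nonneg hA).trans_lt hi)
  linarith

lemma one_sub_phi_pos (hA : ∀ i j, 0 ≤ A i j) (hw : ∀ i, 0 < w A i) (hC : C.Nonempty)
    (hdense : ∀ i ∈ C, 1 - phi A C < 2 * aN A i C / w A i) : 0 < 1 - phi A C := by
  rw [one_sub_phi_eq, aCC_eq_sum_aN]
  exact div_pos (sum_pos (fun i hi => aN_pos_of_lt_div hA (hw i) (hdense i hi)) hC) (vol_pos hw hC)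

lemma mul_le_two_mul_aN {t m : ℝ} (ht : 0 ≤ t) (hwi : 0 < w A i) (hm : m ≤ w A i)
    (h : t ≤ 2 * aN A i C / w A i) : t * m ≤ 2 * aN A i C :=
  (mul_le_mul_of_nonneg_left hm ht).trans ((le_div_iff₀ hwi).1 h)

lemma two_mul_aN_le_mul {t M : ℝ} (ht : 0 ≤ t) (hwi : 0 < w A i) (hM : w A i ≤ M)
    (h : 2 * aN A i C / w A i ≤ t) : 2 * aN A i C ≤ t * M :=
  ((div_le_iff₀ hwi).1 h).trans (mul_le_mul_of_nonneg_left hM ht)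

end

lemma div_two_mul_mul_cancel {c : ℝ} (hc : c ≠ 0) (t m : ℝ) : t / (2 * c) * m * c = t * m / 2 := by
  field_simp

theorem stmt_11_general {n : ℕ} (A : Matrix (Fin n) (Fin n) ℝ)
    (h01 : ∀ i j, A i j = 0 ∨ A i j = 1)
    (hw : ∀ i, 0 < w A i)
    (C : Finset (Fin n)) (hC : C.Nonempty)
    -- the dense and isolated conditions (threshold σ = 0) at the set C itself
    (hdense : ∀ i ∈ C, 2 * aN A i C / w A i > 1 - phi A C)
    (hisol : ∀ i ∉ C, 2 * aN A i C / w A i ≤ 1 - phi A C)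
    -- the external neighbors of C
    (Dout : Finset (Fin n))
    (hDout : Dout = Finset.univ.filter (fun i => i ∉ C ∧ 0 < aN A i C))
    (hDne : Dout.Nonempty)
    -- degree gap
    (hgap : Dout.sup' hDne (w A) < C.inf' hC (w A))
    (β α : ℝ)
    (hβ : β = (1 - phi A C) / (2 * C.card) * C.inf' hC (w A))
    (hα : α = (1 - phi A C) / (2 * C.card) * Dout.sup' hDne (w A)) :
    (∀ i ∈ C, β * C.card ≤ aN A i C) ∧
    (∀ i ∉ C, aN A i C ≤ α * C.card) ∧
    0 ≤ α ∧ α < β ∧ β ≤ 1 := by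
  have hA0 : ∀ i j, 0 ≤ A i j := fun i j => by rcases h01 i j with h | h <;> simp [h]
  have hA1 : ∀ i j, A i j ≤ 1 := fun i j => by rcases h01 i j with h | h <;> simp [h]
  have ht : 0 < 1 - phi A C := one_sub_phi_pos hA0 hw hC hdense
  have hcard : (0 : ℝ) < C.card := by exact_mod_cast hC.card_pos
  have hsup : 0 < Dout.sup' hDne (w A) := (lt_sup'_iff _).2 (hDne.imp fun j hj => ⟨hj, hw j⟩)
  have inside : ∀ i ∈ C, β * C.card ≤ aN A i C := fun i hi => by
    have := mul_le_two_mul_aN ht.le (hw i) (inf'_le _ hi) (hdense i hi).le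
    rw [hβ, div_two_mul_mul_cancel hcard.ne']
    linarith
  have outside : ∀ i ∉ C, aN A i C ≤ α * C.card := fun i hi => by
    rw [hα, div_two_mul_mul_cancel hcard.ne']
    rcases (aN_nonneg hA0 i).eq_or_lt with h0 | hpos
    · rw [← h0]
      positivity
    · have hiD : i ∈ Dout := by simp [hDout, hi, hpos]
      have := two_mul_aN_le_mul ht.le (hw i) (le_sup' _ hiD) (hisol i hi)
      linarith
  refine ⟨inside, outside, by rw [hα]; positivity, ?_, ?_⟩
  · rw [hα, hβ]
    exact mul_lt_mul_of_pos_left hgap (by positivity)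
  · obtain ⟨i, hi⟩ := hC
    exact (mul_le_iff_le_one_left hcard).1 ((inside i hi).trans (aN_le_card hA1 i))

/-- a dense and isolated community (threshold 0) whose minimal internal
degree exceeds the maximal degree of its external neighbors is an (α,β)-cluster with
the stated parameters. -/
theorem stmt_11 {n : ℕ} (A : Matrix (Fin n) (Fin n) ℝ)
    (hsym : ∀ i j, A i j = A j i) (h01 : ∀ i j, A i j = 0 ∨ A i j = 1)
    (hw : ∀ i, 0 < w A i)
    (C : Finset (Fin n)) (hC : C.Nonempty) (hvol : 0 < vol A C)
    -- the dense and isolated conditions (threshold σ = 0) at the set C itself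
    (hdense : ∀ i ∈ C, 2 * aN A i C / w A i > 1 - phi A C)
    (hisol : ∀ i ∉ C, 2 * aN A i C / w A i ≤ 1 - phi A C)
    -- the external neighbors of C
    (Dout : Finset (Fin n))
    (hDout : Dout = Finset.univ.filter (fun i => i ∉ C ∧ 0 < aN A i C))
    (hDne : Dout.Nonempty)
    -- degree gap
    (hgap : Dout.sup' hDne (w A) < C.inf' hC (w A))
    (β α : ℝ)
    (hβ : β = (1 - phi A C) / (2 * C.card) * C.inf' hC (w A))
    (hα : α = (1 - phi A C) / (2 * C.card) * Dout.sup' hDne (w A)) :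
    (∀ i ∈ C, β * C.card ≤ aN A i C) ∧
    (∀ i ∉ C, aN A i C ≤ α * C.card) ∧
    0 ≤ α ∧ α < β ∧ β ≤ 1 :=
  stmt_11_general A h01 hw C hC hdense hisol Dout hDout hDne hgap β α hβ hα
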